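/- Let τ ∈ ℂ with Im τ > 0, let θ: ℂ → ℂ be an order-1 theta function (holomorphic, not identically zero, θ(z+1) = θ(z) and θ(z+τ) = −exp(−2πiz)·θ(z)), let n ≥ 1 and η ∈ ℂ. For f ∈ F_α and g ∈ F_β let f∗g ∈ F_{α+β} denote the unique holomorphic extension of the function (z_1,…,z_{α+β}) ↦ (1/(α!·β!)) Σ_{σ ∈ S_{α+β}} f(z_{σ(1)}+βη,…,z_{σ(α)}+βη)·g(z_{σ(α+1)}−αη,…,z_{σ(α+β)}−αη)·Π_{1 ≤ i ≤ α < j ≤ α+β} θ(z_{σ(i)} − z_{σ(j)} − nη)/θ(z_{σ(i)} − z_{σ(j)}), defined wherever θ(z_i − z_j) ≠ 0 for all i ≠ j. Then ∗ is associative: for all f ∈ F_α, g ∈ F_β, h ∈ F_γ one has (f∗g)∗h = f∗(g∗h) as elements of F_{α+β+γ}. -/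

import Mathlib

set_option linter.unnecessarySeqFocus false

/-- The space `F_α` of holomorphic symmetric functions of `α` variables with
the quasi-periodicity properties of theta functions of order `n`
(for symmetric functions, imposing the quasi-periodicity in each variable is
the same as imposing it in the first variable). -/
def InThetaF (τ : ℂ) (n : ℕ) (α : ℕ) (f : (Fin α → ℂ) → ℂ) : Prop :=
  Differentiable ℂ f ∧
  (∀ (σ : Equiv.Perm (Fin α)) (z : Fin α → ℂ), f (fun r => z (σ r)) = f z) ∧
  (∀ (i : Fin α) (z : Fin α → ℂ), f (Function.update z i (z i + 1)) = f z) ∧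
  (∀ (i : Fin α) (z : Fin α → ℂ),
    f (Function.update z i (z i + τ)) =
      (-1) ^ n * Complex.exp (-2 * Real.pi * Complex.I * n * z i) * f z)

/-- The defining formula for the product `f ∗ g` on the open set where
`θ (z i − z j) ≠ 0` for `i ≠ j`. -/
noncomputable def starFormula (θ : ℂ → ℂ) (n : ℕ) (η : ℂ) (α β : ℕ)
    (f : (Fin α → ℂ) → ℂ) (g : (Fin β → ℂ) → ℂ) (z : Fin (α + β) → ℂ) : ℂ :=
  (1 / ((α.factorial : ℂ) * (β.factorial : ℂ))) *
    ∑ σ : Equiv.Perm (Fin (α + β)),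
      f (fun r : Fin α => z (σ (Fin.castAdd β r)) + (β : ℂ) * η) *
        g (fun s : Fin β => z (σ (Fin.natAdd α s)) - (α : ℂ) * η) *
        ∏ r : Fin α, ∏ s : Fin β,
          θ (z (σ (Fin.castAdd β r)) - z (σ (Fin.natAdd α s)) - (n : ℂ) * η) /
            θ (z (σ (Fin.castAdd β r)) - z (σ (Fin.natAdd α s)))

open Filter Set Topology in
/-- Two entire functions on `ℂ^m` that agree on the set where `θ (z i - z j) ≠ 0`
for all `i ≠ j` (with `θ` entire, not identically zero) agree everywhere. -/
private lemma sp_eq_of_good {m : ℕ} (θ : ℂ → ℂ) (hθdiff : Differentiable ℂ θ)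
    (hθne : ∃ z, θ z ≠ 0) {F G : (Fin m → ℂ) → ℂ}
    (hF : Differentiable ℂ F) (hG : Differentiable ℂ G)
    (heq : ∀ z : Fin m → ℂ, (∀ i j, i ≠ j → θ (z i - z j) ≠ 0) → F z = G z)
    (z : Fin m → ℂ) : F z = G z := by
  obtain ⟨z₀, hz₀⟩ := hθne
  set d : Fin m → ℂ := fun i => ((i : ℕ) : ℂ) with hd
  have hline : Differentiable ℂ (fun w : ℂ => z + w • d) := by
    apply Differentiable.const_add
    exact (differentiable_id.smul_const d)
  set φ : ℂ → ℂ := fun w => F (z + w • d) - G (z + w • d) with hφdef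
  have hφ : Differentiable ℂ φ := (hF.comp hline).sub (hG.comp hline)
  have hψ : ∀ i j : Fin m, i ≠ j →
      ∀ᶠ w in 𝓝[≠] (0 : ℂ), θ (z i - z j + w * (d i - d j)) ≠ 0 := by
    intro i j hij
    have hdij : d i - d j ≠ 0 := by
      simp only [hd, sub_ne_zero]
      exact_mod_cast fun hcon => hij (Fin.ext (Nat.cast_injective hcon))
    set ψ : ℂ → ℂ := fun w => θ (z i - z j + w * (d i - d j)) with hψdef
    have hψd : Differentiable ℂ ψ :=
      hθdiff.comp ((differentiable_id.mul_const _).const_add _)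
    rcases (hψd.analyticAt 0).eventually_eq_zero_or_eventually_ne_zero with hcase | hcase
    · exfalso
      have hall : Set.EqOn ψ 0 Set.univ := by
        refine AnalyticOnNhd.eqOn_zero_of_preconnected_of_eventuallyEq_zero
          (fun x _ => hψd.analyticAt x) isPreconnected_univ (Set.mem_univ (0 : ℂ)) hcase
      have hval := hall (Set.mem_univ ((z₀ - (z i - z j)) / (d i - d j)))
      apply hz₀
      have : z i - z j + (z₀ - (z i - z j)) / (d i - d j) * (d i - d j) = z₀ := by
        field_simp
        ring
      simpa [hψdef, this] using hval
    · exact hcase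
  have hgood : ∀ᶠ w in 𝓝[≠] (0 : ℂ),
      ∀ i j : Fin m, i ≠ j → θ ((z + w • d) i - (z + w • d) j) ≠ 0 := by
    rw [Filter.eventually_all]
    intro i
    rw [Filter.eventually_all]
    intro j
    by_cases hij : i = j
    · exact Filter.Eventually.of_forall fun w hw => absurd hij hw
    · refine (hψ i j hij).mono fun w hw _ => ?_
      have harg : (z + w • d) i - (z + w • d) j = z i - z j + w * (d i - d j) := by
        simp only [Pi.add_apply, Pi.smul_apply, smul_eq_mul]; ring
      rwa [harg]
  have hφ0 : ∀ᶠ w in 𝓝[≠] (0 : ℂ), φ w = 0 :=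
    hgood.mono fun w hw => sub_eq_zero.2 (heq _ hw)
  have hzero : Set.EqOn φ 0 Set.univ :=
    AnalyticOnNhd.eqOn_zero_of_preconnected_of_frequently_eq_zero
      (fun x _ => hφ.analyticAt x) isPreconnected_univ (Set.mem_univ (0 : ℂ))
      hφ0.frequently
  have := hzero (Set.mem_univ (0 : ℂ))
  have h0 : z + (0 : ℂ) • d = z := by simp
  rw [hφdef] at this
  simp only [h0, Pi.zero_apply] at this
  exact sub_eq_zero.1 this

/-- Summand of the combined triple sum, in the `(α+β)+γ` grouping. -/
private noncomputable def sp_tripleL (θ : ℂ → ℂ) (n : ℕ) (η : ℂ) (α β γ : ℕ)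
    (f : (Fin α → ℂ) → ℂ) (g : (Fin β → ℂ) → ℂ) (h : (Fin γ → ℂ) → ℂ)
    (z : Fin (α + β + γ) → ℂ) (τ : Equiv.Perm (Fin (α + β + γ))) : ℂ :=
  f (fun p => z (τ (Fin.castAdd γ (Fin.castAdd β p))) + (γ : ℂ) * η + (β : ℂ) * η) *
  g (fun q => z (τ (Fin.castAdd γ (Fin.natAdd α q))) + (γ : ℂ) * η - (α : ℂ) * η) *
  h (fun s => z (τ (Fin.natAdd (α + β) s)) - ((α + β : ℕ) : ℂ) * η) *
  ((∏ p : Fin α, ∏ q : Fin β,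
      θ (z (τ (Fin.castAdd γ (Fin.castAdd β p))) - z (τ (Fin.castAdd γ (Fin.natAdd α q))) - (n : ℂ) * η) /
        θ (z (τ (Fin.castAdd γ (Fin.castAdd β p))) - z (τ (Fin.castAdd γ (Fin.natAdd α q))))) *
   (∏ p : Fin α, ∏ s : Fin γ,
      θ (z (τ (Fin.castAdd γ (Fin.castAdd β p))) - z (τ (Fin.natAdd (α + β) s)) - (n : ℂ) * η) /
        θ (z (τ (Fin.castAdd γ (Fin.castAdd β p))) - z (τ (Fin.natAdd (α + β) s)))) *
   (∏ q : Fin β, ∏ s : Fin γ,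
      θ (z (τ (Fin.castAdd γ (Fin.natAdd α q))) - z (τ (Fin.natAdd (α + β) s)) - (n : ℂ) * η) /
        θ (z (τ (Fin.castAdd γ (Fin.natAdd α q))) - z (τ (Fin.natAdd (α + β) s)))))

/-- Summand of the combined triple sum, in the `α+(β+γ)` grouping. -/
private noncomputable def sp_tripleR (θ : ℂ → ℂ) (n : ℕ) (η : ℂ) (α β γ : ℕ)
    (f : (Fin α → ℂ) → ℂ) (g : (Fin β → ℂ) → ℂ) (h : (Fin γ → ℂ) → ℂ)
    (z : Fin (α + (β + γ)) → ℂ) (τ : Equiv.Perm (Fin (α + (β + γ)))) : ℂ :=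
  f (fun p => z (τ (Fin.castAdd (β + γ) p)) + ((β + γ : ℕ) : ℂ) * η) *
  g (fun q => z (τ (Fin.natAdd α (Fin.castAdd γ q))) - (α : ℂ) * η + (γ : ℂ) * η) *
  h (fun s => z (τ (Fin.natAdd α (Fin.natAdd β s))) - (α : ℂ) * η - (β : ℂ) * η) *
  ((∏ p : Fin α, ∏ q : Fin β,
      θ (z (τ (Fin.castAdd (β + γ) p)) - z (τ (Fin.natAdd α (Fin.castAdd γ q))) - (n : ℂ) * η) /
        θ (z (τ (Fin.castAdd (β + γ) p)) - z (τ (Fin.natAdd α (Fin.castAdd γ q))))) *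
   (∏ p : Fin α, ∏ s : Fin γ,
      θ (z (τ (Fin.castAdd (β + γ) p)) - z (τ (Fin.natAdd α (Fin.natAdd β s))) - (n : ℂ) * η) /
        θ (z (τ (Fin.castAdd (β + γ) p)) - z (τ (Fin.natAdd α (Fin.natAdd β s))))) *
   (∏ q : Fin β, ∏ s : Fin γ,
      θ (z (τ (Fin.natAdd α (Fin.castAdd γ q))) - z (τ (Fin.natAdd α (Fin.natAdd β s))) - (n : ℂ) * η) /
        θ (z (τ (Fin.natAdd α (Fin.castAdd γ q))) - z (τ (Fin.natAdd α (Fin.natAdd β s))))))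

private lemma sp_lhs_eq (θ : ℂ → ℂ) (n : ℕ) (η : ℂ) (α β γ : ℕ)
    (f : (Fin α → ℂ) → ℂ) (g : (Fin β → ℂ) → ℂ) (h : (Fin γ → ℂ) → ℂ)
    (Fg : (Fin (α + β) → ℂ) → ℂ)
    (hFg : ∀ w : Fin (α + β) → ℂ, (∀ i j, i ≠ j → θ (w i - w j) ≠ 0) →
      Fg w = starFormula θ n η α β f g w)
    (z : Fin (α + β + γ) → ℂ) (hz : ∀ i j, i ≠ j → θ (z i - z j) ≠ 0) :
    starFormula θ n η (α + β) γ Fg h z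
      = (1 / ((α.factorial : ℂ) * β.factorial * γ.factorial)) *
          ∑ τ : Equiv.Perm (Fin (α + β + γ)), sp_tripleL θ n η α β γ f g h z τ := by
  classical
  set E : Equiv.Perm (Fin (α + β)) → Equiv.Perm (Fin (α + β + γ)) :=
    fun p => (finSumFinEquiv (m := α + β) (n := γ)).permCongr
      (p.sumCongr (Equiv.refl (Fin γ))) with hE
  have hE1 : ∀ p (r : Fin (α + β)), E p (Fin.castAdd γ r) = Fin.castAdd γ (p r) := by
    intro p r; simp [hE, Equiv.permCongr_apply]
  have hE2 : ∀ p (s : Fin γ), E p (Fin.natAdd (α + β) s) = Fin.natAdd (α + β) s := by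
    intro p s; simp [hE, Equiv.permCongr_apply]
  have hstep : ∀ σ : Equiv.Perm (Fin (α + β + γ)),
      Fg (fun r : Fin (α + β) => z (σ (Fin.castAdd γ r)) + (γ : ℂ) * η) *
        h (fun s : Fin γ => z (σ (Fin.natAdd (α + β) s)) - ((α + β : ℕ) : ℂ) * η) *
        (∏ r : Fin (α + β), ∏ s : Fin γ,
          θ (z (σ (Fin.castAdd γ r)) - z (σ (Fin.natAdd (α + β) s)) - (n : ℂ) * η) /
            θ (z (σ (Fin.castAdd γ r)) - z (σ (Fin.natAdd (α + β) s)))) =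
      (1 / ((α.factorial : ℂ) * β.factorial)) *
        ∑ σ' : Equiv.Perm (Fin (α + β)), sp_tripleL θ n η α β γ f g h z (σ * E σ') := by
    intro σ
    have hw : ∀ i j : Fin (α + β), i ≠ j →
        θ ((z (σ (Fin.castAdd γ i)) + (γ : ℂ) * η) - (z (σ (Fin.castAdd γ j)) + (γ : ℂ) * η)) ≠ 0 := by
      intro i j hij
      rw [add_sub_add_right_eq_sub]
      exact hz _ _ (fun hcon => hij (Fin.castAdd_injective _ _ (σ.injective hcon)))
    rw [hFg _ hw]
    have hsplit : ∀ σ' : Equiv.Perm (Fin (α + β)),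
        (∏ r : Fin (α + β), ∏ s : Fin γ,
          θ (z (σ (Fin.castAdd γ r)) - z (σ (Fin.natAdd (α + β) s)) - (n : ℂ) * η) /
            θ (z (σ (Fin.castAdd γ r)) - z (σ (Fin.natAdd (α + β) s))))
        = (∏ p : Fin α, ∏ s : Fin γ,
            θ (z (σ (Fin.castAdd γ (σ' (Fin.castAdd β p)))) - z (σ (Fin.natAdd (α + β) s)) - (n : ℂ) * η) /
              θ (z (σ (Fin.castAdd γ (σ' (Fin.castAdd β p)))) - z (σ (Fin.natAdd (α + β) s)))) *
          (∏ q : Fin β, ∏ s : Fin γ,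
            θ (z (σ (Fin.castAdd γ (σ' (Fin.natAdd α q)))) - z (σ (Fin.natAdd (α + β) s)) - (n : ℂ) * η) /
              θ (z (σ (Fin.castAdd γ (σ' (Fin.natAdd α q)))) - z (σ (Fin.natAdd (α + β) s)))) := by
      intro σ'
      rw [← Equiv.prod_comp σ' (fun r : Fin (α + β) => ∏ s : Fin γ,
          θ (z (σ (Fin.castAdd γ r)) - z (σ (Fin.natAdd (α + β) s)) - (n : ℂ) * η) /
            θ (z (σ (Fin.castAdd γ r)) - z (σ (Fin.natAdd (α + β) s))))]
      exact Fin.prod_univ_add _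
    unfold starFormula
    rw [mul_assoc, mul_assoc, Finset.sum_mul]
    congr 1
    refine Finset.sum_congr rfl fun σ' _ => ?_
    rw [hsplit σ']
    simp only [sp_tripleL, Equiv.Perm.mul_apply, hE1, hE2, add_sub_add_right_eq_sub]
    ring
  unfold starFormula
  rw [Finset.sum_congr rfl (fun σ _ => hstep σ), ← Finset.mul_sum, Finset.sum_comm]
  have hre : ∀ σ' : Equiv.Perm (Fin (α + β)),
      ∑ σ : Equiv.Perm (Fin (α + β + γ)), sp_tripleL θ n η α β γ f g h z (σ * E σ')
        = ∑ τ : Equiv.Perm (Fin (α + β + γ)), sp_tripleL θ n η α β γ f g h z τ :=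
    fun σ' => Fintype.sum_equiv (Equiv.mulRight (E σ')) _ _ (fun σ => rfl)
  rw [Finset.sum_congr rfl (fun σ' _ => hre σ'), Finset.sum_const, Finset.card_univ,
    Fintype.card_perm, Fintype.card_fin, nsmul_eq_mul]
  have h1 : ((α + β).factorial : ℂ) ≠ 0 := Nat.cast_ne_zero.2 (Nat.factorial_ne_zero _)
  have h2 : (α.factorial : ℂ) ≠ 0 := Nat.cast_ne_zero.2 (Nat.factorial_ne_zero _)
  have h3 : (β.factorial : ℂ) ≠ 0 := Nat.cast_ne_zero.2 (Nat.factorial_ne_zero _)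
  have h4 : (γ.factorial : ℂ) ≠ 0 := Nat.cast_ne_zero.2 (Nat.factorial_ne_zero _)
  field_simp

private lemma sp_rhs_eq (θ : ℂ → ℂ) (n : ℕ) (η : ℂ) (α β γ : ℕ)
    (f : (Fin α → ℂ) → ℂ) (g : (Fin β → ℂ) → ℂ) (h : (Fin γ → ℂ) → ℂ)
    (Gh : (Fin (β + γ) → ℂ) → ℂ)
    (hGh : ∀ w : Fin (β + γ) → ℂ, (∀ i j, i ≠ j → θ (w i - w j) ≠ 0) →
      Gh w = starFormula θ n η β γ g h w)
    (z : Fin (α + (β + γ)) → ℂ) (hz : ∀ i j, i ≠ j → θ (z i - z j) ≠ 0) :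
    starFormula θ n η α (β + γ) f Gh z
      = (1 / ((α.factorial : ℂ) * β.factorial * γ.factorial)) *
          ∑ τ : Equiv.Perm (Fin (α + (β + γ))), sp_tripleR θ n η α β γ f g h z τ := by
  classical
  set E : Equiv.Perm (Fin (β + γ)) → Equiv.Perm (Fin (α + (β + γ))) :=
    fun p => (finSumFinEquiv (m := α) (n := β + γ)).permCongr
      ((Equiv.refl (Fin α)).sumCongr p) with hE
  have hE1 : ∀ p (r : Fin α), E p (Fin.castAdd (β + γ) r) = Fin.castAdd (β + γ) r := by
    intro p r; simp [hE, Equiv.permCongr_apply]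
  have hE2 : ∀ p (t : Fin (β + γ)), E p (Fin.natAdd α t) = Fin.natAdd α (p t) := by
    intro p t; simp [hE, Equiv.permCongr_apply]
  have hnat_inj : Function.Injective (Fin.natAdd α : Fin (β + γ) → Fin (α + (β + γ))) := by
    intro a b hab
    simpa [Fin.ext_iff] using hab
  have hstep : ∀ σ : Equiv.Perm (Fin (α + (β + γ))),
      f (fun r : Fin α => z (σ (Fin.castAdd (β + γ) r)) + ((β + γ : ℕ) : ℂ) * η) *
        Gh (fun t : Fin (β + γ) => z (σ (Fin.natAdd α t)) - (α : ℂ) * η) *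
        (∏ r : Fin α, ∏ t : Fin (β + γ),
          θ (z (σ (Fin.castAdd (β + γ) r)) - z (σ (Fin.natAdd α t)) - (n : ℂ) * η) /
            θ (z (σ (Fin.castAdd (β + γ) r)) - z (σ (Fin.natAdd α t)))) =
      (1 / ((β.factorial : ℂ) * γ.factorial)) *
        ∑ σ' : Equiv.Perm (Fin (β + γ)), sp_tripleR θ n η α β γ f g h z (σ * E σ') := by
    intro σ
    have hw : ∀ i j : Fin (β + γ), i ≠ j →
        θ ((z (σ (Fin.natAdd α i)) - (α : ℂ) * η) - (z (σ (Fin.natAdd α j)) - (α : ℂ) * η)) ≠ 0 := by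
      intro i j hij
      rw [sub_sub_sub_cancel_right]
      exact hz _ _ (fun hcon => hij (hnat_inj (σ.injective hcon)))
    rw [hGh _ hw]
    have hsplit : ∀ σ' : Equiv.Perm (Fin (β + γ)),
        (∏ r : Fin α, ∏ t : Fin (β + γ),
          θ (z (σ (Fin.castAdd (β + γ) r)) - z (σ (Fin.natAdd α t)) - (n : ℂ) * η) /
            θ (z (σ (Fin.castAdd (β + γ) r)) - z (σ (Fin.natAdd α t))))
        = (∏ p : Fin α, ∏ q : Fin β,
            θ (z (σ (Fin.castAdd (β + γ) p)) - z (σ (Fin.natAdd α (σ' (Fin.castAdd γ q)))) - (n : ℂ) * η) /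
              θ (z (σ (Fin.castAdd (β + γ) p)) - z (σ (Fin.natAdd α (σ' (Fin.castAdd γ q)))))) *
          (∏ p : Fin α, ∏ s : Fin γ,
            θ (z (σ (Fin.castAdd (β + γ) p)) - z (σ (Fin.natAdd α (σ' (Fin.natAdd β s)))) - (n : ℂ) * η) /
              θ (z (σ (Fin.castAdd (β + γ) p)) - z (σ (Fin.natAdd α (σ' (Fin.natAdd β s)))))) := by
      intro σ'
      rw [← Finset.prod_mul_distrib]
      refine Finset.prod_congr rfl fun p _ => ?_
      rw [← Equiv.prod_comp σ' (fun t : Fin (β + γ) =>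
          θ (z (σ (Fin.castAdd (β + γ) p)) - z (σ (Fin.natAdd α t)) - (n : ℂ) * η) /
            θ (z (σ (Fin.castAdd (β + γ) p)) - z (σ (Fin.natAdd α t))))]
      exact Fin.prod_univ_add _
    unfold starFormula
    rw [mul_comm (f fun r : Fin α => z (σ (Fin.castAdd (β + γ) r)) + ((β + γ : ℕ) : ℂ) * η),
      mul_assoc, mul_assoc, Finset.sum_mul]
    congr 1
    refine Finset.sum_congr rfl fun σ' _ => ?_
    rw [hsplit σ']
    simp only [sp_tripleR, Equiv.Perm.mul_apply, hE1, hE2, sub_sub_sub_cancel_right]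
    ring
  unfold starFormula
  rw [Finset.sum_congr rfl (fun σ _ => hstep σ), ← Finset.mul_sum, Finset.sum_comm]
  have hre : ∀ σ' : Equiv.Perm (Fin (β + γ)),
      ∑ σ : Equiv.Perm (Fin (α + (β + γ))), sp_tripleR θ n η α β γ f g h z (σ * E σ')
        = ∑ τ : Equiv.Perm (Fin (α + (β + γ))), sp_tripleR θ n η α β γ f g h z τ :=
    fun σ' => Fintype.sum_equiv (Equiv.mulRight (E σ')) _ _ (fun σ => rfl)
  rw [Finset.sum_congr rfl (fun σ' _ => hre σ'), Finset.sum_const, Finset.card_univ,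
    Fintype.card_perm, Fintype.card_fin, nsmul_eq_mul]
  have h1 : ((β + γ).factorial : ℂ) ≠ 0 := Nat.cast_ne_zero.2 (Nat.factorial_ne_zero _)
  have h2 : (α.factorial : ℂ) ≠ 0 := Nat.cast_ne_zero.2 (Nat.factorial_ne_zero _)
  have h3 : (β.factorial : ℂ) ≠ 0 := Nat.cast_ne_zero.2 (Nat.factorial_ne_zero _)
  have h4 : (γ.factorial : ℂ) ≠ 0 := Nat.cast_ne_zero.2 (Nat.factorial_ne_zero _)
  field_simp

private lemma sp_bridge (θ : ℂ → ℂ) (n : ℕ) (η : ℂ) (α β γ : ℕ)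
    (f : (Fin α → ℂ) → ℂ) (g : (Fin β → ℂ) → ℂ) (h : (Fin γ → ℂ) → ℂ)
    (z : Fin (α + β + γ) → ℂ) :
    ∑ τ : Equiv.Perm (Fin (α + β + γ)), sp_tripleL θ n η α β γ f g h z τ
      = ∑ τ : Equiv.Perm (Fin (α + (β + γ))),
          sp_tripleR θ n η α β γ f g h (fun i => z (Fin.cast (Nat.add_assoc α β γ).symm i)) τ := by
  classical
  set e : Fin (α + β + γ) ≃ Fin (α + (β + γ)) := finCongr (Nat.add_assoc α β γ) with he
  apply Fintype.sum_equiv e.permCongr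
  intro τ
  have hz' : ∀ x : Fin (α + (β + γ)),
      (fun i => z (Fin.cast (Nat.add_assoc α β γ).symm i)) (e.permCongr τ x)
        = z (τ (e.symm x)) := by
    intro x
    show z (Fin.cast (Nat.add_assoc α β γ).symm (e (τ (e.symm x)))) = _
    exact congrArg z (Fin.ext (by simp [he]))
  have hA : ∀ p : Fin α, e.symm (Fin.castAdd (β + γ) p) = Fin.castAdd γ (Fin.castAdd β p) := by
    intro p; apply Fin.ext <;> simp [he]
  have hB : ∀ q : Fin β, e.symm (Fin.natAdd α (Fin.castAdd γ q)) = Fin.castAdd γ (Fin.natAdd α q) := by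
    intro q; apply Fin.ext <;> simp [he]
  have hC : ∀ s : Fin γ, e.symm (Fin.natAdd α (Fin.natAdd β s)) = Fin.natAdd (α + β) s := by
    intro s; apply Fin.ext <;> simp [he, Nat.add_assoc]
  unfold sp_tripleL sp_tripleR
  simp only [hz', hA, hB, hC]
  have hff : (fun p : Fin α => z (τ (Fin.castAdd γ (Fin.castAdd β p))) + (γ : ℂ) * η + (β : ℂ) * η)
      = (fun p => z (τ (Fin.castAdd γ (Fin.castAdd β p))) + ((β + γ : ℕ) : ℂ) * η) := by
    funext p; push_cast; ring
  have hgg : (fun q : Fin β => z (τ (Fin.castAdd γ (Fin.natAdd α q))) + (γ : ℂ) * η - (α : ℂ) * η)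
      = (fun q => z (τ (Fin.castAdd γ (Fin.natAdd α q))) - (α : ℂ) * η + (γ : ℂ) * η) := by
    funext q; ring
  have hhh : (fun s : Fin γ => z (τ (Fin.natAdd (α + β) s)) - ((α + β : ℕ) : ℂ) * η)
      = (fun s => z (τ (Fin.natAdd (α + β) s)) - (α : ℂ) * η - (β : ℂ) * η) := by
    funext s; push_cast; ring
  rw [hff, hgg, hhh]

theorem star_product_associative (τ : ℂ) (hτ : 0 < τ.im) (θ : ℂ → ℂ)
    (hθdiff : Differentiable ℂ θ) (hθne : ∃ z, θ z ≠ 0)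
    (hθ1 : ∀ z, θ (z + 1) = θ z)
    (hθτ : ∀ z, θ (z + τ) = -Complex.exp (-2 * Real.pi * Complex.I * z) * θ z)
    (n : ℕ) (hn : 1 ≤ n) (η : ℂ)
    (star : (α β : ℕ) → ((Fin α → ℂ) → ℂ) → ((Fin β → ℂ) → ℂ) →
      ((Fin (α + β) → ℂ) → ℂ))
    (hstar : ∀ (α β : ℕ), 1 ≤ α → 1 ≤ β →
      ∀ (f : (Fin α → ℂ) → ℂ) (g : (Fin β → ℂ) → ℂ),
        InThetaF τ n α f → InThetaF τ n β g →
          InThetaF τ n (α + β) (star α β f g) ∧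
          ∀ z : Fin (α + β) → ℂ, (∀ i j, i ≠ j → θ (z i - z j) ≠ 0) →
            star α β f g z = starFormula θ n η α β f g z)
    (α β γ : ℕ) (hα : 1 ≤ α) (hβ : 1 ≤ β) (hγ : 1 ≤ γ)
    (f : (Fin α → ℂ) → ℂ) (g : (Fin β → ℂ) → ℂ) (h : (Fin γ → ℂ) → ℂ)
    (hf : InThetaF τ n α f) (hg : InThetaF τ n β g) (hh : InThetaF τ n γ h) :
    ∀ z : Fin (α + β + γ) → ℂ,
      star (α + β) γ (star α β f g) h z =
        star α (β + γ) f (star β γ g h)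
          (fun i => z (Fin.cast (Nat.add_assoc α β γ).symm i)) := by
  have h1 := hstar α β hα hβ f g hf hg
  have h2 := hstar β γ hβ hγ g h hg hh
  have h3 := hstar (α + β) γ (hα.trans (Nat.le_add_right α β)) hγ (star α β f g) h h1.1 hh
  have h4 := hstar α (β + γ) hα (hβ.trans (Nat.le_add_right β γ)) f (star β γ g h) hf h2.1
  have hlin : Differentiable ℂ (fun (z : Fin (α + β + γ) → ℂ) =>
      (fun i : Fin (α + (β + γ)) => z (Fin.cast (Nat.add_assoc α β γ).symm i))) := by
    rw [differentiable_pi]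
    intro i
    exact (ContinuousLinearMap.proj (R := ℂ) (φ := fun _ : Fin (α + β + γ) => ℂ)
      (Fin.cast (Nat.add_assoc α β γ).symm i)).differentiable
  intro z
  refine sp_eq_of_good θ hθdiff hθne h3.1.1 ((h4.1.1).comp hlin) ?_ z
  intro z hzgood
  have hgood' : ∀ i j : Fin (α + (β + γ)), i ≠ j →
      θ (z (Fin.cast (Nat.add_assoc α β γ).symm i) - z (Fin.cast (Nat.add_assoc α β γ).symm j)) ≠ 0 := by
    intro i j hij
    exact hzgood _ _ (fun hcon => hij (Fin.cast_injective _ hcon))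
  show star (α + β) γ (star α β f g) h z =
    star α (β + γ) f (star β γ g h) (fun i => z (Fin.cast (Nat.add_assoc α β γ).symm i))
  rw [h3.2 z hzgood, h4.2 _ hgood']
  rw [sp_lhs_eq θ n η α β γ f g h _ h1.2 z hzgood,
    sp_rhs_eq θ n η α β γ f g h _ h2.2 _ hgood']
  rw [sp_bridge]
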